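/- arXiv:2404.16443 — 3 statements merged into one kernel-verified Lean document; each statement's English description precedes it below -/
import Mathlib

section
/- (Discrete Loomis–Whitney in 3D) For any nonempty finite set E ⊆ ℤ³, |E|² ≤ |φ₁₂(E)| · |φ₁₃(E)| · |φ₂₃(E)|, where φ₁₂(i,j,k) = (i,j), φ₁₃(i,j,k) = (i,k), φ₂₃(i,j,k) = (j,k). -/
/-!
Slice `E` by its first coordinate `i`. A slice `Eᵢ` embeds into `φ₂₃(E)`, and also into the
product of the slices `Aᵢ`, `Bᵢ` of `A = φ₁₂(E)` and `B = φ₁₃(E)` at `i`. Hence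
`|Eᵢ|² ≤ |φ₂₃(E)| |Aᵢ| |Bᵢ|`, and Cauchy–Schwarz over `i` gives
`|E|² ≤ |φ₂₃(E)| (∑ᵢ |Aᵢ|) (∑ᵢ |Bᵢ|) = |φ₂₃(E)| |A| |B|`.
-/

open Finset

namespace Finset

variable {α β γ : Type*} [DecidableEq α] [DecidableEq β] [DecidableEq γ]

lemma card_filter_fst_eq_le_card_image_snd (s : Finset (α × β)) (a : α) :
    #{p ∈ s | p.1 = a} ≤ #(s.image Prod.snd) :=
  card_le_card_of_injOn Prod.snd (fun _ hp => mem_image_of_mem _ (mem_filter.1 hp).1)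
    fun _ hp _ hq h => Prod.ext ((mem_filter.1 hp).2.trans (mem_filter.1 hq).2.symm) h

lemma card_filter_fst_eq_le_mul_card_filter_fst_eq (E : Finset (α × β × γ)) (a : α) :
    #{p ∈ E | p.1 = a} ≤
      #{q ∈ E.image (fun p => (p.1, p.2.1)) | q.1 = a} *
        #{q ∈ E.image (fun p => (p.1, p.2.2)) | q.1 = a} := by
  rw [← card_product]
  refine card_le_card_of_injOn (fun p => ((p.1, p.2.1), (p.1, p.2.2))) ?_ ?_
  · intro p hp
    obtain ⟨hpE, rfl⟩ := mem_filter.1 hp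
    exact mem_product.2 ⟨mem_filter.2 ⟨mem_image_of_mem _ hpE, rfl⟩,
      mem_filter.2 ⟨mem_image_of_mem _ hpE, rfl⟩⟩
  · intro p _ q _ h
    simp only [Prod.mk.injEq] at h
    exact Prod.ext h.1.1 (Prod.ext h.1.2 h.2.2)

lemma card_image_eq_sum_card_filter_fst_eq {ι δ : Type*} [DecidableEq δ] (s : Finset (α × ι))
    (f : α × ι → α × δ) (hf : ∀ p, (f p).1 = p.1) :
    #(s.image f) = ∑ a ∈ s.image Prod.fst, #{q ∈ s.image f | q.1 = a} :=
  card_eq_sum_card_fiberwise fun _ hq => by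
    obtain ⟨p, hp, rfl⟩ := mem_image.1 hq
    exact hf p ▸ mem_image_of_mem _ hp

/-- **Discrete Loomis–Whitney inequality** in three dimensions. -/
theorem card_sq_le_card_image_mul_card_image_mul_card_image (E : Finset (α × β × γ)) :
    #E ^ 2 ≤ #(E.image (fun p => (p.1, p.2.1))) * #(E.image (fun p => (p.1, p.2.2))) *
      #(E.image (fun p => (p.2.1, p.2.2))) := by
  set A := E.image (fun p => (p.1, p.2.1))
  set B := E.image (fun p => (p.1, p.2.2))
  set C := E.image (fun p => (p.2.1, p.2.2))
  set I := E.image Prod.fst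
  have hE : #E = ∑ i ∈ I, #{p ∈ E | p.1 = i} := card_eq_sum_card_image _ _
  have hA : #A = ∑ i ∈ I, #{q ∈ A | q.1 = i} :=
    card_image_eq_sum_card_filter_fst_eq E _ fun _ => rfl
  have hB : #B = ∑ i ∈ I, #{q ∈ B | q.1 = i} :=
    card_image_eq_sum_card_filter_fst_eq E _ fun _ => rfl
  have slice_sq_le (i : α) :
      #{p ∈ E | p.1 = i} ^ 2 ≤ (#C * #{q ∈ A | q.1 = i}) * #{q ∈ B | q.1 = i} := by
    rw [sq, mul_assoc]
    exact Nat.mul_le_mul (card_filter_fst_eq_le_card_image_snd E i)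
      (card_filter_fst_eq_le_mul_card_filter_fst_eq E i)
  calc #E ^ 2
      ≤ (∑ i ∈ I, #C * #{q ∈ A | q.1 = i}) * ∑ i ∈ I, #{q ∈ B | q.1 = i} := by
        rw [hE]
        exact sum_sq_le_sum_mul_sum_of_sq_le_mul I (fun _ _ => Nat.zero_le _)
          (fun _ _ => Nat.zero_le _) fun i _ => slice_sq_le i
    _ = #A * #B * #C := by rw [← mul_sum, ← hA, ← hB]; ring

end Finset

theorem stmt_1_general (E : Finset (ℤ × ℤ × ℤ)) :
    E.card ^ 2 ≤ (E.image (fun p => (p.1, p.2.1))).card *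
      (E.image (fun p => (p.1, p.2.2))).card *
      (E.image (fun p => (p.2.1, p.2.2))).card :=
  card_sq_le_card_image_mul_card_image_mul_card_image E

theorem stmt_1 (E : Finset (ℤ × ℤ × ℤ)) (hE : E.Nonempty) :
    E.card ^ 2 ≤ (E.image (fun p => (p.1, p.2.1))).card *
      (E.image (fun p => (p.1, p.2.2))).card *
      (E.image (fun p => (p.2.1, p.2.2))).card :=
  stmt_1_general E
end

section
/- Let E be a finite subset of ℤ³ and K a natural number with |φ_{i,j}(E)| ≤ K, where φ_{i,j}(i,j,k)=(i,j). Let W ≥ 1 and suppose that for every (j₀,k₀) ∈ φ_{j,k}(E), where φ_{j,k}(i,j,k)=(j,k), the set {i | (i,j₀,k₀) ∈ E} has at least W elements. Then |φ_j(E)| ≤ K / W, where φ_j(i,j,k) = j. -/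
theorem stmt_3 (E : Finset (ℤ × ℤ × ℤ)) (K W : ℕ) (hW : 1 ≤ W)
    (hij : (E.image (fun p => (p.1, p.2.1))).card ≤ K)
    (hfib : ∀ q ∈ E.image (fun p => p.2), W ≤
      ((E.filter (fun p => p.2 = q)).image (fun p => p.1)).card) :
    (E.image (fun p => p.2.1)).card ≤ K / W := by
  set A := E.image (fun p => (p.1, p.2.1)) with hA
  set J := E.image (fun p => p.2.1) with hJ
  rw [Nat.le_div_iff_mul_le hW]
  refine le_trans ?_ hij
  have hmaps : ∀ a ∈ A, a.2 ∈ J := by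
    intro a ha
    simp only [hA, Finset.mem_image] at ha
    obtain ⟨p, hp, rfl⟩ := ha
    exact Finset.mem_image_of_mem _ hp
  rw [Finset.card_eq_sum_card_fiberwise hmaps]
  calc J.card * W = ∑ _j ∈ J, W := by rw [Finset.sum_const, smul_eq_mul]
    _ ≤ _ := by
      refine Finset.sum_le_sum ?_
      intro j hj
      simp only [hJ, Finset.mem_image] at hj
      obtain ⟨p, hp, rfl⟩ := hj
      have hq : p.2 ∈ E.image (fun p => p.2) := Finset.mem_image_of_mem _ hp
      refine le_trans (hfib p.2 hq) ?_
      refine Finset.card_le_card_of_injOn (fun i => (i, p.2.1)) ?_ ?_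
      · intro i hi
        simp only [Finset.mem_coe, Finset.mem_image, Finset.mem_filter] at hi
        obtain ⟨r, ⟨hr, hr2⟩, rfl⟩ := hi
        exact Finset.mem_filter.mpr ⟨Finset.mem_image.mpr ⟨r, hr, by rw [hr2]⟩, rfl⟩
      · intro x _ y _ h
        exact (Prod.mk.injEq ..).mp h |>.1
end

section
/- Let E be a finite subset of ℤ³ and K, W positive naturals. Assume |φ_i(E)| ≤ W, |φ_{i,j}(E)| ≤ K, and |φ_{i,k}(E)| ≤ K, where φ_i, φ_{i,j}, φ_{i,k} are the projections onto the first coordinate, first two coordinates, and first-and-third coordinates respectively. Further assume that for every (j₀,k₀) ∈ φ_{j,k}(E), the fiber {i | (i,j₀,k₀) ∈ E} has at least W elements. Then |E| ≤ K²/W. -/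
/-!
Double count the pairs `(p, q)` of points of `E` on a common line parallel to the first axis.
Each `p` has at least `W` partners, so there are at least `W * |E|` such pairs; and
`(p, q) ↦ ((p₁, p₂), (q₁, q₃))` embeds them into `φ_{i,j}(E) × φ_{i,k}(E)`, so there are at
most `K²`.
-/

open Finset

variable {α β γ : Type*} [DecidableEq α] [DecidableEq β] [DecidableEq γ]

def fiberPairs (E : Finset (α × β × γ)) : Finset ((_ : α × β × γ) × (α × β × γ)) :=
  E.sigma fun p => E.filter fun q => q.2 = p.2

theorem card_fiberPairs_le (E : Finset (α × β × γ)) :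
    #(fiberPairs E) ≤ #(E.image fun p => (p.1, p.2.1)) * #(E.image fun p => (p.1, p.2.2)) := by
  rw [← card_product]
  refine card_le_card_of_injOn (fun x => ((x.1.1, x.1.2.1), (x.2.1, x.2.2.2))) ?_ ?_
  · rintro ⟨p, q⟩ hpq
    simp only [fiberPairs, coe_sigma, Set.mem_sigma_iff, mem_coe, mem_filter] at hpq
    obtain ⟨hp, hq, -⟩ := hpq
    exact mem_product.2 ⟨mem_image_of_mem _ hp, mem_image_of_mem _ hq⟩
  · rintro ⟨p, q⟩ hpq ⟨p', q'⟩ hpq' h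
    simp only [fiberPairs, coe_sigma, Set.mem_sigma_iff, mem_coe, mem_filter] at hpq hpq'
    simp only [Prod.mk.injEq] at h
    obtain ⟨⟨h₁, h₂⟩, h₃, h₄⟩ := h
    have hp₂ : p.2 = p'.2 := Prod.ext h₂ (by rw [← hpq.2.2, ← hpq'.2.2, h₄])
    obtain rfl : p = p' := Prod.ext h₁ hp₂
    obtain rfl : q = q' := Prod.ext h₃ (by rw [hpq.2.2, hpq'.2.2])
    rfl

theorem mul_card_le_card_fiberPairs (E : Finset (α × β × γ)) (W : ℕ)
    (hfib : ∀ q ∈ E.image Prod.snd, W ≤ #((E.filter fun p => p.2 = q).image Prod.fst)) :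
    W * #E ≤ #(fiberPairs E) := by
  rw [fiberPairs, card_sigma, mul_comm, ← smul_eq_mul, ← sum_const]
  exact sum_le_sum fun p hp => (hfib p.2 (mem_image_of_mem _ hp)).trans card_image_le

theorem stmt_4_general (E : Finset (ℤ × ℤ × ℤ)) (K W : ℕ) (hWpos : 0 < W)
    (hij : (E.image (fun p => (p.1, p.2.1))).card ≤ K)
    (hik : (E.image (fun p => (p.1, p.2.2))).card ≤ K)
    (hfib : ∀ q ∈ E.image (fun p => p.2), W ≤
      ((E.filter (fun p => p.2 = q)).image (fun p => p.1)).card) :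
    E.card ≤ K ^ 2 / W := by
  rw [Nat.le_div_iff_mul_le hWpos, mul_comm, sq]
  calc W * #E ≤ #(fiberPairs E) := mul_card_le_card_fiberPairs E W hfib
    _ ≤ _ := card_fiberPairs_le E
    _ ≤ K * K := Nat.mul_le_mul hij hik

theorem stmt_4 (E : Finset (ℤ × ℤ × ℤ)) (K W : ℕ) (hK : 0 < K) (hWpos : 0 < W)
    (hi : (E.image (fun p => p.1)).card ≤ W)
    (hij : (E.image (fun p => (p.1, p.2.1))).card ≤ K)
    (hik : (E.image (fun p => (p.1, p.2.2))).card ≤ K)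
    (hfib : ∀ q ∈ E.image (fun p => p.2), W ≤
      ((E.filter (fun p => p.2 = q)).image (fun p => p.1)).card) :
    E.card ≤ K ^ 2 / W :=
  stmt_4_general E K W hWpos hij hik hfib
end
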